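/- arXiv:2201.12937 — 2 statements merged into one kernel-verified Lean document; each statement's English description precedes it below -/
import Mathlib

section
/- Let U' = UR and suppose {|ψ_a⟩}_a is an orthonormal eigenbasis of U with eigenvalues e^{iφ_a}, and |λ⟩ a unit eigenvector of U' with eigenvalue e^{iλ}, with e^{iλ} ≠ e^{iφ_a} for all a. Define the M×M matrix Λ by Λ_{m,m'} = Σ_a b_a ⟨d,m|ψ_a⟩⟨ψ_a|d,m'⟩ where 1 + i b_a = 2/(1 - e^{i(λ - φ_a)}) and b_a is real. If the vector u with components u_m = ⟨d,m|λ⟩ is nonzero, then Λ u = 0, and hence det Λ = 0. -/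
open Complex Matrix

/-!
Let `w = Σ_m ⟨d m, v⟩ d m` be the projection of `v` onto the span of the `d m`, so `R v = v - 2 w`
and `⟨d m, w⟩ = u m`. Pairing `U (R v) = e^{iλ} v` with `ψ a` gives
`⟨ψ a, v⟩ = (1 + i b_a) ⟨ψ a, w⟩`; expanding `⟨d m, v⟩ = ⟨d m, w⟩` in the basis `ψ` then leaves
exactly `i (Λ u)_m = 0`.
-/

theorem eq_two_div_one_sub_div_mul {K : Type*} [Field K] {E F c s : K} (hEF : E ≠ F) (hF : F ≠ 0)
    (h : E * c = F * (c - 2 * s)) : c = 2 / (1 - E / F) * s := by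
  have hFE : F - E ≠ 0 := sub_ne_zero.mpr hEF.symm
  rw [one_sub_div hF, div_div_eq_mul_div]
  field_simp
  linear_combination -h

theorem LinearIsometry.inner_apply_right_of_apply_eq_smul {𝕜 E : Type*} [RCLike 𝕜]
    [NormedAddCommGroup E] [InnerProductSpace 𝕜 E] (U : E →ₗᵢ[𝕜] E) {ψ : E} {e : 𝕜}
    (hψ : U ψ = e • ψ) (he : ‖e‖ = 1) (x : E) :
    inner 𝕜 ψ (U x) = e * inner 𝕜 ψ x := by
  have h := U.inner_map_map ψ x
  rw [hψ, inner_smul_left] at h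
  rw [← h, ← mul_assoc, RCLike.mul_conj, he]
  simp

theorem OrthonormalBasis.sum_mul_inner_mul_inner_eq_zero {𝕜 E ι : Type*} [RCLike 𝕜]
    [NormedAddCommGroup E] [InnerProductSpace 𝕜 E] [Fintype ι] (ψ : OrthonormalBasis ι 𝕜 E)
    {v w x : E} {γ : ι → 𝕜} (hvw : ∀ a, inner 𝕜 (ψ a) v = (1 + γ a) * inner 𝕜 (ψ a) w)
    (hx : inner 𝕜 x v = inner 𝕜 x w) :
    ∑ a, γ a * inner 𝕜 x (ψ a) * inner 𝕜 (ψ a) w = 0 := by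
  calc ∑ a, γ a * inner 𝕜 x (ψ a) * inner 𝕜 (ψ a) w
      = ∑ a, inner 𝕜 x (ψ a) * inner 𝕜 (ψ a) v - ∑ a, inner 𝕜 x (ψ a) * inner 𝕜 (ψ a) w := by
        rw [← Finset.sum_sub_distrib]
        exact Finset.sum_congr rfl fun a _ => by rw [hvw]; ring
    _ = 0 := by rw [ψ.sum_inner_mul_inner, ψ.sum_inner_mul_inner, hx, sub_self]

theorem Lambda_mulVec_eq_zero_and_det_eq_zero_general
    {H : Type*} [NormedAddCommGroup H] [InnerProductSpace ℂ H]
    {M ι : Type*} [Fintype M] [DecidableEq M] [Fintype ι]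
    (d : M → H) (hd : Orthonormal ℂ d)
    (U : H ≃ₗᵢ[ℂ] H) (U' : H ≃ₗᵢ[ℂ] H) (R : H →ₗ[ℂ] H)
    (hR : ∀ x : H, R x = x - (2 : ℂ) • ∑ m : M, (inner ℂ (d m) x : ℂ) • d m)
    (hU' : ∀ x : H, U' x = U (R x))
    (ψ : OrthonormalBasis ι ℂ H) (φ : ι → ℝ)
    (hψ : ∀ a : ι, U (ψ a) = Complex.exp (φ a * Complex.I) • ψ a)
    (lam : ℝ) (v : H)
    (hveig : U' v = Complex.exp (lam * Complex.I) • v)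
    (hne : ∀ a : ι, Complex.exp (lam * Complex.I) ≠ Complex.exp (φ a * Complex.I))
    (b : ι → ℝ)
    (hb : ∀ a : ι, (1 : ℂ) + Complex.I * b a =
      2 / (1 - Complex.exp ((lam - φ a : ℝ) * Complex.I)))
    (Λ : Matrix M M ℂ)
    (hΛ : ∀ m m' : M, Λ m m' =
      ∑ a : ι, (b a : ℂ) * (inner ℂ (d m) (ψ a) : ℂ) * (inner ℂ (ψ a) (d m') : ℂ))
    (u : M → ℂ) (hu : ∀ m : M, u m = (inner ℂ (d m) v : ℂ)) (hu0 : u ≠ 0) :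
    Λ.mulVec u = 0 ∧ Λ.det = 0 := by
  set w : H := ∑ m, inner ℂ (d m) v • d m
  have hdw (m : M) : inner ℂ (d m) w = u m := by rw [hd.inner_right_fintype, hu]
  have hΛu (m : M) : (Λ *ᵥ u) m = ∑ a, (b a : ℂ) * inner ℂ (d m) (ψ a) * inner ℂ (ψ a) w := by
    simp only [mulVec, dotProduct, hΛ, hu, w, inner_sum, inner_smul_right, Finset.sum_mul,
      Finset.mul_sum]
    rw [Finset.sum_comm]
    exact Finset.sum_congr rfl fun a _ => Finset.sum_congr rfl fun m' _ => by ring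
  have hcoef (a : ι) : inner ℂ (ψ a) v = (1 + I * b a) * inner ℂ (ψ a) w := by
    have hUψ (x : H) : inner ℂ (ψ a) (U x) = exp (φ a * I) * inner ℂ (ψ a) x :=
      U.toLinearIsometry.inner_apply_right_of_apply_eq_smul (hψ a) (norm_exp_ofReal_mul_I _) x
    have heig := congrArg (inner ℂ (ψ a)) hveig
    rw [hU', hR, hUψ, inner_sub_right, inner_smul_right, inner_smul_right] at heig
    rw [hb, ofReal_sub, sub_mul, exp_sub]
    exact eq_two_div_one_sub_div_mul (hne a) (exp_ne_zero _) heig.symm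
  have hmul : Λ *ᵥ u = 0 := funext fun m => by
    have h := ψ.sum_mul_inner_mul_inner_eq_zero (γ := fun a => I * b a) hcoef
      (x := d m) (by rw [hdw, hu])
    simp only [mul_assoc, ← Finset.mul_sum, mul_eq_zero, I_ne_zero, false_or] at h
    rw [hΛu, Pi.zero_apply, ← h]
    exact Finset.sum_congr rfl fun a _ => by ring
  exact ⟨hmul, exists_mulVec_eq_zero_iff.mp ⟨u, hu0, hmul⟩⟩

theorem Lambda_mulVec_eq_zero_and_det_eq_zero
    {H : Type*} [NormedAddCommGroup H] [InnerProductSpace ℂ H] [FiniteDimensional ℂ H]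
    {M ι : Type*} [Fintype M] [DecidableEq M] [Fintype ι]
    (d : M → H) (hd : Orthonormal ℂ d)
    (U : H ≃ₗᵢ[ℂ] H) (U' : H ≃ₗᵢ[ℂ] H) (R : H →ₗ[ℂ] H)
    (hR : ∀ x : H, R x = x - (2 : ℂ) • ∑ m : M, (inner ℂ (d m) x : ℂ) • d m)
    (hU' : ∀ x : H, U' x = U (R x))
    (ψ : OrthonormalBasis ι ℂ H) (φ : ι → ℝ)
    (hψ : ∀ a : ι, U (ψ a) = Complex.exp (φ a * Complex.I) • ψ a)
    (lam : ℝ) (v : H) (hv : ‖v‖ = 1)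
    (hveig : U' v = Complex.exp (lam * Complex.I) • v)
    (hne : ∀ a : ι, Complex.exp (lam * Complex.I) ≠ Complex.exp (φ a * Complex.I))
    (b : ι → ℝ)
    (hb : ∀ a : ι, (1 : ℂ) + Complex.I * b a =
      2 / (1 - Complex.exp ((lam - φ a : ℝ) * Complex.I)))
    (Λ : Matrix M M ℂ)
    (hΛ : ∀ m m' : M, Λ m m' =
      ∑ a : ι, (b a : ℂ) * (inner ℂ (d m) (ψ a) : ℂ) * (inner ℂ (ψ a) (d m') : ℂ))
    (u : M → ℂ) (hu : ∀ m : M, u m = (inner ℂ (d m) v : ℂ)) (hu0 : u ≠ 0) :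
    Λ.mulVec u = 0 ∧ Λ.det = 0 :=
  Lambda_mulVec_eq_zero_and_det_eq_zero_general d hd U U' R hR hU' ψ φ hψ lam v hveig hne b hb Λ hΛ
    u hu hu0
end

section
/- Let n ≥ 2 be an even integer, θ_k = 2πk/n, and for integers x,y define M(x,y) = Σ_{(k,l): cos θ_k cos θ_l ≠ 1} cos(2π(kx+ly)/n)/(1 - cos θ_k cos θ_l) and let C = M(0,0). Then for x = y = 1, C - M(1,1) = n² - 2, i.e., Σ_{(k,l)} (1 - cos(θ_k + θ_l))/(1 - cos θ_k cos θ_l) = n² - 2. -/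
open Real Finset

/-!
Since `1 - cos (θₖ + θₗ) = (1 - cos θₖ cos θₗ) + sin θₖ sin θₗ`, each summand is `1` plus
`sin θₖ sin θₗ / (1 - cos θₖ cos θₗ)`. The substitution `k ↦ -k (mod n)` fixes the cosines and
negates `sin θₖ`, so these extra terms sum to zero, and the sum just counts the pairs with
`cos θₖ cos θₗ ≠ 1`: all `n²` pairs except `(0, 0)` and `(n/2, n/2)`.
-/

lemma mul_eq_one_iff_of_abs_le_one {a b : ℝ} (ha : |a| ≤ 1) (hb : |b| ≤ 1) :
    a * b = 1 ↔ (a = 1 ∧ b = 1) ∨ (a = -1 ∧ b = -1) := by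
  constructor
  · intro h
    have habs : |a| * |b| = 1 := by rw [← abs_mul, h, abs_one]
    have ha1 : |a| = 1 := by nlinarith [abs_nonneg a, abs_nonneg b]
    rcases abs_eq zero_le_one |>.1 ha1 with rfl | rfl
    · left; exact ⟨rfl, by linarith⟩
    · right; exact ⟨rfl, by linarith⟩
  · rintro (⟨rfl, rfl⟩ | ⟨rfl, rfl⟩) <;> norm_num

lemma one_sub_cos_add_div {a b : ℝ} (h : cos a * cos b ≠ 1) :
    (1 - cos (a + b)) / (1 - cos a * cos b) = 1 + sin a * sin b / (1 - cos a * cos b) := by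
  have hD : 1 - cos a * cos b ≠ 0 := sub_ne_zero.2 h.symm
  rw [cos_add]
  field_simp
  ring

lemma sub_mod_sub_mod {n k : ℕ} (hk : k < n) : (n - (n - k) % n) % n = k := by
  rcases Nat.eq_zero_or_pos k with rfl | hk0
  · simp
  · rw [Nat.mod_eq_of_lt (by omega : n - k < n), Nat.sub_sub_self hk.le, Nat.mod_eq_of_lt hk]

lemma sum_range_eq_zero_of_sub_mod (n : ℕ) (f : ℕ → ℝ) (h : ∀ k < n, f ((n - k) % n) = -f k) :
    ∑ k ∈ range n, f k = 0 := by
  refine sum_involution (fun k _ => (n - k) % n) (fun k hk => by rw [h k (mem_range.1 hk)]; ring)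
    (fun k hk hf hfix => hf ?_) (fun k hk => mem_range.2 ?_)
    (fun k hk => sub_mod_sub_mod (mem_range.1 hk))
  · have := h k (mem_range.1 hk)
    rw [hfix] at this
    linarith
  · exact Nat.mod_lt _ (by simp at hk; omega)

section TwoPiMulDiv

variable {n k l : ℕ}

lemma two_pi_mul_div_mem_Ico (hk : k < n) : 2 * π * k / n ∈ Set.Ico 0 (2 * π) := by
  have hn : (0 : ℝ) < n := by exact_mod_cast hk.trans_le' k.zero_le
  have hkn : (k : ℝ) < n := by exact_mod_cast hk
  exact ⟨by positivity, by rw [div_lt_iff₀ hn]; nlinarith [pi_pos]⟩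

lemma cos_two_pi_mul_div_eq_one_iff (hk : k < n) : cos (2 * π * k / n) = 1 ↔ k = 0 := by
  obtain ⟨h0, h2π⟩ := two_pi_mul_div_mem_Ico hk
  have hn : (n : ℝ) ≠ 0 := by exact_mod_cast (hk.trans_le' k.zero_le).ne'
  rw [cos_eq_one_iff_of_lt_of_lt (by linarith [pi_pos]) h2π]
  simp [hn, pi_ne_zero]

lemma cos_two_pi_mul_div_eq_neg_one_iff (hk : k < n) :
    cos (2 * π * k / n) = -1 ↔ 2 * k = n := by
  obtain ⟨h0, h2π⟩ := two_pi_mul_div_mem_Ico hk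
  have hn : (n : ℝ) ≠ 0 := by exact_mod_cast (hk.trans_le' k.zero_le).ne'
  rw [← neg_eq_iff_eq_neg, ← cos_sub_pi,
    cos_eq_one_iff_of_lt_of_lt (by linarith [pi_pos]) (by linarith [pi_pos]), sub_eq_zero,
    div_eq_iff hn, ← @Nat.cast_inj ℝ]
  push_cast
  constructor <;> intro h <;> nlinarith [pi_pos]

lemma cos_mul_cos_eq_one_iff (he : Even n) (hk : k < n) (hl : l < n) :
    cos (2 * π * k / n) * cos (2 * π * l / n) = 1 ↔ (k, l) = (0, 0) ∨ (k, l) = (n / 2, n / 2) := by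
  rw [mul_eq_one_iff_of_abs_le_one (abs_cos_le_one _) (abs_cos_le_one _),
    cos_two_pi_mul_div_eq_one_iff hk, cos_two_pi_mul_div_eq_one_iff hl,
    cos_two_pi_mul_div_eq_neg_one_iff hk, cos_two_pi_mul_div_eq_neg_one_iff hl]
  obtain ⟨m, rfl⟩ := he
  simp only [Prod.ext_iff]
  omega

lemma card_filter_cos_mul_cos_ne_one (hn : 2 ≤ n) (he : Even n) :
    #{p ∈ range n ×ˢ range n | cos (2 * π * p.1 / n) * cos (2 * π * p.2 / n) ≠ 1} + 2 = n ^ 2 := by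
  have hS : {p ∈ range n ×ˢ range n | cos (2 * π * p.1 / n) * cos (2 * π * p.2 / n) ≠ 1} =
      range n ×ˢ range n \ {(0, 0), (n / 2, n / 2)} := by
    rw [sdiff_eq_filter]
    refine filter_congr fun p hp => ?_
    rw [mem_product, mem_range, mem_range] at hp
    rw [Ne, cos_mul_cos_eq_one_iff he hp.1 hp.2]
    simp
  have hpair : #({(0, 0), (n / 2, n / 2)} : Finset (ℕ × ℕ)) = 2 :=
    card_pair (by simp only [ne_eq, Prod.ext_iff]; omega)
  have hsub : {(0, 0), (n / 2, n / 2)} ⊆ range n ×ˢ range n := by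
    simp only [insert_subset_iff, singleton_subset_iff, mem_product, mem_range]
    omega
  have := card_sdiff_add_card_eq_card hsub
  rw [hpair, card_product, card_range] at this
  rw [hS, this, sq]

lemma two_pi_mul_sub_div (hk : k < n) (hk0 : 0 < k) :
    2 * π * ((n - k) % n : ℕ) / n = 2 * π - 2 * π * k / n := by
  have hn : (n : ℝ) ≠ 0 := by exact_mod_cast (hk0.trans hk).ne'
  rw [Nat.mod_eq_of_lt (by omega), Nat.cast_sub hk.le]
  field_simp

lemma cos_two_pi_mul_sub_mod_div (hk : k < n) :
    cos (2 * π * ((n - k) % n : ℕ) / n) = cos (2 * π * k / n) := by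
  rcases Nat.eq_zero_or_pos k with rfl | hk0
  · simp
  · rw [two_pi_mul_sub_div hk hk0, cos_two_pi_sub]

lemma sin_two_pi_mul_sub_mod_div (hk : k < n) :
    sin (2 * π * ((n - k) % n : ℕ) / n) = -sin (2 * π * k / n) := by
  rcases Nat.eq_zero_or_pos k with rfl | hk0
  · simp
  · rw [two_pi_mul_sub_div hk hk0, sin_two_pi_sub]

end TwoPiMulDiv

lemma sum_sin_mul_sin_div_eq_zero (n : ℕ) :
    ∑ p ∈ range n ×ˢ range n with cos (2 * π * p.1 / n) * cos (2 * π * p.2 / n) ≠ 1,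
      sin (2 * π * p.1 / n) * sin (2 * π * p.2 / n) /
        (1 - cos (2 * π * p.1 / n) * cos (2 * π * p.2 / n)) = 0 := by
  -- the excluded terms are `x / 0 = 0`, so the filter can be dropped
  rw [sum_filter_of_ne fun p _ h => by contrapose! h; rw [h, sub_self, div_zero], sum_product]
  refine sum_range_eq_zero_of_sub_mod n _ fun k hk => ?_
  rw [← sum_neg_distrib]
  refine sum_congr rfl fun l _ => ?_
  rw [cos_two_pi_mul_sub_mod_div hk, sin_two_pi_mul_sub_mod_div hk]
  ring

theorem C_sub_M_one_one (n : ℕ) (hn : 2 ≤ n) (he : Even n) :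
    (∑ p ∈ ((Finset.range n ×ˢ Finset.range n).filter
        (fun p => Real.cos (2 * π * p.1 / n) * Real.cos (2 * π * p.2 / n) ≠ 1)),
      1 / (1 - Real.cos (2 * π * p.1 / n) * Real.cos (2 * π * p.2 / n))) -
    (∑ p ∈ ((Finset.range n ×ˢ Finset.range n).filter
        (fun p => Real.cos (2 * π * p.1 / n) * Real.cos (2 * π * p.2 / n) ≠ 1)),
      Real.cos (2 * π * (p.1 * 1 + p.2 * 1) / n) /
        (1 - Real.cos (2 * π * p.1 / n) * Real.cos (2 * π * p.2 / n))) = n ^ 2 - 2 ∧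
    (∑ p ∈ ((Finset.range n ×ˢ Finset.range n).filter
        (fun p => Real.cos (2 * π * p.1 / n) * Real.cos (2 * π * p.2 / n) ≠ 1)),
      (1 - Real.cos (2 * π * p.1 / n + 2 * π * p.2 / n)) /
        (1 - Real.cos (2 * π * p.1 / n) * Real.cos (2 * π * p.2 / n))) = n ^ 2 - 2 := by
  have key : ∑ p ∈ range n ×ˢ range n with cos (2 * π * p.1 / n) * cos (2 * π * p.2 / n) ≠ 1,
      (1 - cos (2 * π * p.1 / n + 2 * π * p.2 / n)) /
        (1 - cos (2 * π * p.1 / n) * cos (2 * π * p.2 / n)) = n ^ 2 - 2 := by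
    rw [sum_congr rfl fun p hp => one_sub_cos_add_div (mem_filter.1 hp).2, sum_add_distrib,
      sum_sin_mul_sin_div_eq_zero, sum_const, nsmul_one, add_zero, eq_sub_iff_add_eq]
    exact_mod_cast card_filter_cos_mul_cos_ne_one hn he
  refine ⟨?_, key⟩
  rw [← sum_sub_distrib, ← key]
  refine sum_congr rfl fun p _ => ?_
  rw [← sub_div, mul_one, mul_one, mul_add, add_div]
end
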